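/- arXiv:1605.04265 — 4 statements merged into one kernel-verified Lean document; each statement's English description precedes it below -/
import Mathlib

section
/- If a junction edge e of an abstract road graph G cannot be completely covered by a well-shaped label, then no label in any labeling of G covers e; consequently the graph G' obtained by deleting e admits an optimal labeling with the same number of labeled road sections as G. -/
open Classical
noncomputable section

/-- An abstract road graph: a (multi)graph with directed edge incidences,
a partition of edges into road sections (`isRS`) and junction edges,
a road assignment, and a positive length for each edge. -/
structure RoadGraph (V E : Type) where
  inc : E → V × V
  isRS : E → Prop
  road : E → ℕ
  len : E → ℝ
  len_pos : ∀ e, 0 < len e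

namespace RoadGraph

variable {V E : Type}

/-- A (candidate) label: the path of covered edges together with the head
offset `s` on the first edge and the tail offset `t` on the last edge. -/
structure Lab (E : Type) where
  path : List E
  s : ℝ
  t : ℝ

/-- The internal (completely covered) edges of a label. -/
def Lab.interiorEdges (ℓ : Lab E) : List E := (ℓ.path.drop 1).dropLast

/-- The set of covered positions of a label on an edge `e`. -/
noncomputable def coveredSet (G : RoadGraph V E) (ℓ : Lab E) (e : E) : Set ℝ :=
  if ℓ.path.length = 1 then (if ℓ.path = [e] then Set.Icc ℓ.s ℓ.t else ∅)
  else if ℓ.path.head? = some e then Set.Icc ℓ.s (G.len e)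
  else if ℓ.path.getLast? = some e then Set.Icc 0 ℓ.t
  else if e ∈ ℓ.path then Set.Icc 0 (G.len e) else ∅

/-- The length of the curve described by a label. -/
noncomputable def labLength (G : RoadGraph V E) (ℓ : Lab E) : ℝ :=
  match ℓ.path with
  | [] => 0
  | [e] => ℓ.t - ℓ.s
  | e :: rest => (G.len e - ℓ.s) + ((rest.dropLast).map G.len).sum + ℓ.t

/-- Validity of a label w.r.t. the road graph `G` and the road-name lengths `lam`:
the covered edges form a nonempty simple directed path of edges of one road,
the label starts and ends on road sections with offsets inside the edges,
and the total length equals the name length of the road. -/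
def Valid (G : RoadGraph V E) (lam : ℕ → ℝ) (ℓ : Lab E) : Prop :=
  ℓ.path ≠ [] ∧ ℓ.path.Nodup ∧
  List.Chain' (fun e f => (G.inc e).2 = (G.inc f).1) ℓ.path ∧
  (∀ e ∈ ℓ.path, ∀ f ∈ ℓ.path, G.road e = G.road f) ∧
  (∀ e, ℓ.path.head? = some e → G.isRS e ∧ 0 ≤ ℓ.s ∧ ℓ.s ≤ G.len e) ∧
  (∀ e, ℓ.path.getLast? = some e → G.isRS e ∧ 0 ≤ ℓ.t ∧ ℓ.t ≤ G.len e) ∧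
  (ℓ.path.length = 1 → ℓ.s ≤ ℓ.t) ∧
  (∀ e, ℓ.path.head? = some e → labLength G ℓ = lam (G.road e))

/-- `(e, x)` is the head or the tail point of the label `ℓ`. -/
def isEndPt (ℓ : Lab E) (e : E) (x : ℝ) : Prop :=
  (ℓ.path.head? = some e ∧ x = ℓ.s) ∨ (ℓ.path.getLast? = some e ∧ x = ℓ.t)

/-- Two labels overlap if they share a point that is not the head/tail of both. -/
def Overlap (G : RoadGraph V E) (ℓ ℓ' : Lab E) : Prop :=
  ∃ e x, x ∈ coveredSet G ℓ e ∧ x ∈ coveredSet G ℓ' e ∧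
    ¬(isEndPt ℓ e x ∧ isEndPt ℓ' e x)

/-- A labeling: a set of valid, well-shaped, mutually non-overlapping labels. -/
def IsLabeling (G : RoadGraph V E) (lam : ℕ → ℝ) (WS : Lab E → Prop)
    (L : Set (Lab E)) : Prop :=
  (∀ ℓ ∈ L, Valid G lam ℓ ∧ WS ℓ) ∧
  (∀ ℓ ∈ L, ∀ ℓ' ∈ L, ℓ ≠ ℓ' → ¬ Overlap G ℓ ℓ')

/-- The set of road sections labeled by a set of labels. -/
def labeledSecs (G : RoadGraph V E) (L : Set (Lab E)) : Set E :=
  {e | G.isRS e ∧ ∃ ℓ ∈ L, e ∈ ℓ.path}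

/-- The number of labeled road sections. -/
noncomputable def countLabeled (G : RoadGraph V E) (L : Set (Lab E)) : ℕ :=
  (labeledSecs G L).ncard

/-- An optimal labeling: a solution of MaxTotalCovering. -/
def Optimal (G : RoadGraph V E) (lam : ℕ → ℝ) (WS : Lab E → Prop)
    (L : Set (Lab E)) : Prop :=
  IsLabeling G lam WS L ∧
  ∀ L', IsLabeling G lam WS L' → countLabeled G L' ≤ countLabeled G L

/-- A well-shaped label fits entirely on the road section `e`. -/
def Stub (G : RoadGraph V E) (lam : ℕ → ℝ) (WS : Lab E → Prop) (e : E) : Prop :=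
  G.isRS e ∧ ∃ ℓ : Lab E, Valid G lam ℓ ∧ WS ℓ ∧ ℓ.path = [e]

/-- Edge `e` is incident to vertex `v`. -/
def incident (G : RoadGraph V E) (e : E) (v : V) : Prop :=
  (G.inc e).1 = v ∨ (G.inc e).2 = v

/-- One step through a junction edge. -/
def JStep (G : RoadGraph V E) (v w : V) : Prop :=
  ∃ f, ¬ G.isRS f ∧ ((G.inc f) = (v, w) ∨ (G.inc f) = (w, v))

/-- Reachability through junction edges only. -/
def JReach (G : RoadGraph V E) : V → V → Prop := Relation.ReflTransGen (JStep G)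

/-- `Re G e u`: road sections of the road of `e` reachable from `u`
when traversing junction edges only. -/
def Re (G : RoadGraph V E) (e : E) (u : V) : Set E :=
  {e' | G.isRS e' ∧ G.road e' = G.road e ∧ ∃ v, JReach G u v ∧ incident G e' v}

end RoadGraph

/-
A label may start or end only on a road section, so a junction edge on its path is neither the
first nor the last edge, hence is an internal, completely covered edge. A junction edge that no
well-shaped label covers completely therefore lies on no label of any labeling, and every
labeling of `G` is already a labeling avoiding that edge.
-/

theorem List.mem_dropLast_drop_one_of_ne_head?_of_ne_getLast? {α : Type*} {l : List α} {a : α}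
    (ha : a ∈ l) (hhead : l.head? ≠ some a) (hlast : l.getLast? ≠ some a) :
    a ∈ (l.drop 1).dropLast := by
  cases l with
  | nil => simp at ha
  | cons b rest =>
    have hrest : a ∈ rest := by grind
    exact List.mem_dropLast_of_mem_of_ne_getLast? hrest (by grind)

namespace RoadGraph

variable {V E : Type} {G : RoadGraph V E} {lam : ℕ → ℝ} {ℓ : Lab E} {e : E}

theorem Valid.mem_interiorEdges_of_not_isRS (hℓ : Valid G lam ℓ) (he : e ∈ ℓ.path)
    (hjunc : ¬ G.isRS e) : e ∈ ℓ.interiorEdges := by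
  obtain ⟨-, -, -, -, hhead, hlast, -, -⟩ := hℓ
  exact List.mem_dropLast_drop_one_of_ne_head?_of_ne_getLast? he
    (fun h => hjunc (hhead e h).1) (fun h => hjunc (hlast e h).1)

theorem not_mem_path_of_not_coverable {WS : Lab E → Prop} {L : Set (Lab E)}
    (hL : IsLabeling G lam WS L) (hjunc : ¬ G.isRS e)
    (hnocover : ¬ ∃ ℓ : Lab E, Valid G lam ℓ ∧ WS ℓ ∧ e ∈ ℓ.interiorEdges) :
    ∀ ℓ ∈ L, e ∉ ℓ.path := fun ℓ hmem he =>
  have ⟨hvalid, hws⟩ := hL.1 ℓ hmem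
  hnocover ⟨ℓ, hvalid, hws, hvalid.mem_interiorEdges_of_not_isRS he hjunc⟩

end RoadGraph

open RoadGraph in
/-- If a junction edge `e` cannot be completely covered by a
well-shaped label, then no label in any labeling covers `e`; consequently
deleting `e` preserves the achievable numbers of labeled road sections. -/
theorem stmt0 {V E : Type} (G : RoadGraph V E) (lam : ℕ → ℝ) (WS : Lab E → Prop)
    (e : E) (hjunc : ¬ G.isRS e)
    (hnocover : ¬ ∃ ℓ : Lab E, Valid G lam ℓ ∧ WS ℓ ∧ e ∈ ℓ.interiorEdges) :
    (∀ L : Set (Lab E), IsLabeling G lam WS L → ∀ ℓ ∈ L, e ∉ ℓ.path) ∧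
    (∀ n : ℕ,
      (∃ L, IsLabeling G lam WS L ∧ countLabeled G L = n) ↔
      (∃ L, IsLabeling G lam WS L ∧ (∀ ℓ ∈ L, e ∉ ℓ.path) ∧
        countLabeled G L = n)) := by
  have avoid L (hL : IsLabeling G lam WS L) := not_mem_path_of_not_coverable hL hjunc hnocover
  refine ⟨avoid, fun n => ⟨?_, ?_⟩⟩
  · rintro ⟨L, hL, hcount⟩
    exact ⟨L, hL, avoid L hL, hcount⟩
  · rintro ⟨L, hL, -, hcount⟩
    exact ⟨L, hL, hcount⟩
end
end

section
/- In any optimal labeling of an abstract road graph, every road section on which a well-shaped label fits entirely (without extending into any junction edge) is labeled. -/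
open Classical
noncomputable section

open RoadGraph in
lemma mem_path_of_coveredSet {V E : Type} (G : RoadGraph V E) (l : Lab E) (f : E) (x : ℝ)
    (hx : x ∈ coveredSet G l f) : f ∈ l.path := by
  unfold coveredSet at hx
  by_cases h1 : l.path.length = 1
  · rw [if_pos h1] at hx
    by_cases h2 : l.path = [f]
    · rw [h2]; simp
    · rw [if_neg h2] at hx; exact absurd hx (Set.notMem_empty x)
  · rw [if_neg h1] at hx
    by_cases h3 : l.path.head? = some f
    · exact List.mem_of_mem_head? h3
    · rw [if_neg h3] at hx
      by_cases h4 : l.path.getLast? = some f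
      · exact List.mem_of_mem_getLast? h4
      · rw [if_neg h4] at hx
        by_cases h5 : f ∈ l.path
        · exact h5
        · rw [if_neg h5] at hx; exact absurd hx (Set.notMem_empty x)

open RoadGraph in
/-- In any optimal labeling, every road section on which a
well-shaped label fits entirely is labeled. -/
theorem stmt4 {V E : Type} (G : RoadGraph V E) (lam : ℕ → ℝ) (WS : Lab E → Prop)
    (L : Set (Lab E)) (hopt : Optimal G lam WS L)
    (e : E) (hrs : G.isRS e)
    (hfit : ∃ ℓ : Lab E, Valid G lam ℓ ∧ WS ℓ ∧ ℓ.path = [e]) :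
    e ∈ labeledSecs G L := by
  by_contra hne
  obtain ⟨ℓ, hval, hws, hpath⟩ := hfit
  have hnotin : ∀ ℓ' ∈ L, e ∉ ℓ'.path := fun ℓ' hℓ' hmem => hne ⟨hrs, ℓ', hℓ', hmem⟩
  have key : ∀ ℓ' ∈ L, ∀ f x, x ∈ coveredSet G ℓ f → x ∈ coveredSet G ℓ' f → False := by
    intro ℓ' hℓ' f x h1 h2
    have hf1 := mem_path_of_coveredSet G ℓ f x h1
    have hf2 := mem_path_of_coveredSet G ℓ' f x h2
    rw [hpath, List.mem_singleton] at hf1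
    exact hnotin ℓ' hℓ' (hf1 ▸ hf2)
  have hlab0 : IsLabeling G lam WS {ℓ} := by
    constructor
    · rintro m rfl; exact ⟨hval, hws⟩
    · rintro m rfl m' rfl hmm; exact absurd rfl hmm
  have hsecs0 : labeledSecs G {ℓ} = {e} := by
    ext f
    simp only [labeledSecs, Set.mem_setOf_eq, Set.mem_singleton_iff]
    constructor
    · rintro ⟨_, m, rfl, hfm⟩
      rw [hpath, List.mem_singleton] at hfm; exact hfm
    · rintro rfl; exact ⟨hrs, ℓ, rfl, by rw [hpath]; simp⟩
  have h1 : 1 ≤ countLabeled G L := by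
    have := hopt.2 {ℓ} hlab0
    rwa [countLabeled, hsecs0, Set.ncard_singleton] at this
  have hfin : (labeledSecs G L).Finite := by
    by_contra hinf
    rw [countLabeled, Set.Infinite.ncard hinf] at h1
    omega
  have hlab1 : IsLabeling G lam WS (insert ℓ L) := by
    constructor
    · rintro m (rfl | hm)
      · exact ⟨hval, hws⟩
      · exact hopt.1.1 m hm
    · rintro a (rfl | ha) b (rfl | hb) hab
      · exact absurd rfl hab
      · rintro ⟨f, x, h1, h2, _⟩; exact key b hb f x h1 h2
      · rintro ⟨f, x, h1, h2, _⟩; exact key a ha f x h2 h1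
      · exact hopt.1.2 a ha b hb hab
  have hsecs1 : labeledSecs G (insert ℓ L) = insert e (labeledSecs G L) := by
    ext f
    simp only [labeledSecs, Set.mem_setOf_eq, Set.mem_insert_iff]
    constructor
    · rintro ⟨hf, m, (rfl | hm), hfm⟩
      · left; rw [hpath, List.mem_singleton] at hfm; exact hfm
      · right; exact ⟨hf, m, hm, hfm⟩
    · rintro (rfl | ⟨hf, m, hm, hfm⟩)
      · exact ⟨hrs, ℓ, Or.inl rfl, by rw [hpath]; simp⟩
      · exact ⟨hf, m, Or.inr hm, hfm⟩
  have hcount : countLabeled G (insert ℓ L) = countLabeled G L + 1 := by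
    rw [countLabeled, countLabeled, hsecs1, Set.ncard_insert_of_notMem hne hfin]
  have := hopt.2 (insert ℓ L) hlab1
  omega
end
end

section
/- Two distinct selected labels ℓ and ℓ' do not overlap only if no edge covered by ℓ is an internal (completely covered) edge of ℓ'; equivalently, if some edge covered by ℓ is completely covered by ℓ', then ℓ and ℓ' overlap. -/
open Classical
noncomputable section

/-!
An internal edge `e` of `ℓ'` is covered by `ℓ'` entirely, and, since the path of `ℓ'` has no
repeated edge, `e` is neither its first nor its last edge, so no point of `e` is an endpoint
of `ℓ'`. A valid label covering `e` covers some point of `e`, and that point witnesses the overlap.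
-/

theorem List.head?_ne_some_of_mem_tail {α : Type*} {l : List α} {a : α} (hl : l.Nodup)
    (ha : a ∈ l.tail) : l.head? ≠ some a := by
  intro h
  obtain ⟨ys, rfl⟩ := List.head?_eq_some_iff.mp h
  exact (List.nodup_cons.mp hl).1 ha

theorem List.getLast?_ne_some_of_mem_dropLast {α : Type*} {l : List α} {a : α} (hl : l.Nodup)
    (ha : a ∈ l.dropLast) : l.getLast? ≠ some a := by
  intro h
  obtain ⟨ys, rfl⟩ := List.getLast?_eq_some_iff.mp h
  rw [List.dropLast_concat] at ha
  exact List.disjoint_of_nodup_append hl ha (List.mem_singleton_self a)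

namespace RoadGraph

variable {V E : Type} {e : E} {x : ℝ}

namespace Lab

variable {ℓ : Lab E}

theorem mem_path_of_mem_interiorEdges (he : e ∈ ℓ.interiorEdges) : e ∈ ℓ.path :=
  List.mem_of_mem_drop (List.mem_of_mem_dropLast he)

theorem path_length_ne_one_of_mem_interiorEdges (he : e ∈ ℓ.interiorEdges) :
    ℓ.path.length ≠ 1 := by
  intro h
  obtain ⟨a, ha⟩ := List.length_eq_one_iff.mp h
  simp [interiorEdges, ha] at he

theorem head?_ne_some_of_mem_interiorEdges (hnd : ℓ.path.Nodup) (he : e ∈ ℓ.interiorEdges) :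
    ℓ.path.head? ≠ some e :=
  List.head?_ne_some_of_mem_tail hnd (List.drop_one ▸ List.mem_of_mem_dropLast he)

theorem getLast?_ne_some_of_mem_interiorEdges (hnd : ℓ.path.Nodup)
    (he : e ∈ ℓ.interiorEdges) : ℓ.path.getLast? ≠ some e := by
  rw [interiorEdges, List.dropLast_drop_eq_drop_dropLast] at he
  exact List.getLast?_ne_some_of_mem_dropLast hnd (List.mem_of_mem_drop he)

theorem not_isEndPt_of_mem_interiorEdges (hnd : ℓ.path.Nodup) (he : e ∈ ℓ.interiorEdges) :
    ¬ isEndPt ℓ e x := by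
  rintro (⟨hhead, -⟩ | ⟨hlast, -⟩)
  · exact head?_ne_some_of_mem_interiorEdges hnd he hhead
  · exact getLast?_ne_some_of_mem_interiorEdges hnd he hlast

end Lab

variable (G : RoadGraph V E) {ℓ : Lab E}

theorem coveredSet_eq_Icc_of_mem_interiorEdges (hnd : ℓ.path.Nodup)
    (he : e ∈ ℓ.interiorEdges) : coveredSet G ℓ e = Set.Icc 0 (G.len e) := by
  rw [coveredSet, if_neg (Lab.path_length_ne_one_of_mem_interiorEdges he),
    if_neg (Lab.head?_ne_some_of_mem_interiorEdges hnd he),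
    if_neg (Lab.getLast?_ne_some_of_mem_interiorEdges hnd he),
    if_pos (Lab.mem_path_of_mem_interiorEdges he)]

variable {G} {lam : ℕ → ℝ}

theorem Valid.coveredSet_subset_Icc (hv : Valid G lam ℓ) :
    coveredSet G ℓ e ⊆ Set.Icc 0 (G.len e) := by
  obtain ⟨-, -, -, -, hs, ht, -, -⟩ := hv
  unfold coveredSet
  split_ifs with _ hsingle hfirst hlast
  · exact Set.Icc_subset_Icc (hs e (by simp [hsingle])).2.1 (ht e (by simp [hsingle])).2.2
  · exact Set.empty_subset _
  · exact Set.Icc_subset_Icc_left (hs e hfirst).2.1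
  · exact Set.Icc_subset_Icc_right (ht e hlast).2.2
  · exact subset_rfl
  · exact Set.empty_subset _

theorem Valid.coveredSet_nonempty (hv : Valid G lam ℓ) (he : e ∈ ℓ.path) :
    (coveredSet G ℓ e).Nonempty := by
  obtain ⟨-, -, -, -, hs, ht, hst, -⟩ := hv
  unfold coveredSet
  split_ifs with hlen hsingle hfirst hlast
  · exact Set.nonempty_Icc.mpr (hst hlen)
  · obtain ⟨a, ha⟩ := List.length_eq_one_iff.mp hlen
    rw [ha, List.mem_singleton] at he
    exact absurd (he ▸ ha) hsingle
  · exact Set.nonempty_Icc.mpr (hs e hfirst).2.2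
  · exact Set.nonempty_Icc.mpr (ht e hlast).2.1
  · exact Set.nonempty_Icc.mpr (G.len_pos e).le

end RoadGraph

open RoadGraph in
/-- If some edge covered by `ℓ` is an internal (completely
covered) edge of `ℓ'`, then `ℓ` and `ℓ'` overlap. -/
theorem stmt7 {V E : Type} (G : RoadGraph V E) (lam : ℕ → ℝ)
    (ℓ ℓ' : Lab E) (hv : Valid G lam ℓ) (hv' : Valid G lam ℓ')
    (e : E) (he : e ∈ ℓ.path) (hint : e ∈ ℓ'.interiorEdges) :
    Overlap G ℓ ℓ' := by
  have hnd' : ℓ'.path.Nodup := hv'.2.1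
  obtain ⟨x, hx⟩ := Valid.coveredSet_nonempty hv he
  have hx' : x ∈ coveredSet G ℓ' e := by
    rw [coveredSet_eq_Icc_of_mem_interiorEdges G hnd' hint]
    exact Valid.coveredSet_subset_Icc hv hx
  exact ⟨e, x, hx, hx', fun h => Lab.not_isEndPt_of_mem_interiorEdges hnd' hint h.2⟩
end
end

section
/- Suppose every road in the abstract road graph G is a path and a label ℓ labels road section e and a stub e' of the same road R across a junction edge j. Then either (a) both e and e' are labeled by other labels of an optimal labeling, in which case removing ℓ keeps the same set of labeled sections; or (b) ℓ can be replaced by labels fully contained in e and (if needed) in e', preserving the number of labeled road sections. In both cases the junction edge j can be removed while preserving the optimal value of MaxTotalCovering. -/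
open Classical
noncomputable section

/-!
A road section in the interior of `ℓ` would be joined to `u` by junction edges that `ℓ` covers,
so it would be `e` or a stub, hence at least `λ(R)` long; but the interior of `ℓ` including `j`
has total length at most `λ(R)`. So the only road sections of `ℓ` are its two ends `e` and `e'`,
and since labels end on road sections, `j` lies inside `ℓ` and no other label can touch it.
Replacing `ℓ` by stub labels on `e` and on `e'` (where no other label covers them) keeps the
labeled road sections and frees `j`.
-/

theorem List.add_le_sum_map_of_ne {α M : Type*} [DecidableEq α] [AddCommMonoid M] [Preorder M]
    [IsOrderedAddMonoid M] {f : α → M} (hf : ∀ a, 0 ≤ f a) {l : List α} {x y : α}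
    (hx : x ∈ l) (hy : y ∈ l) (hxy : x ≠ y) : f x + f y ≤ (l.map f).sum := by
  have hsum : (l.map f).sum = f y + ((l.erase y).map f).sum := by
    simpa using ((List.perm_cons_erase hy).map f).sum_eq
  have hx' : f x ≤ ((l.erase y).map f).sum :=
    List.single_le_sum (by simp [hf]) _ (List.mem_map_of_mem ((List.mem_erase_of_ne hxy).2 hx))
  rw [hsum, add_comm (f y)]
  exact add_le_add_left hx' _

namespace RoadGraph

variable {V E : Type} {G : RoadGraph V E} {lam : ℕ → ℝ} {WS : Lab E → Prop}

theorem mem_path_of_mem_coveredSet {ℓ : Lab E} {f : E} {x : ℝ} (hx : x ∈ coveredSet G ℓ f) :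
    f ∈ ℓ.path := by
  by_contra hf
  have hsingle : ℓ.path ≠ [f] := fun h => hf (h ▸ List.mem_singleton_self f)
  have hhead : ℓ.path.head? ≠ some f := fun h => hf (List.mem_of_mem_head? h)
  have hlast : ℓ.path.getLast? ≠ some f := fun h => hf (List.mem_of_mem_getLast? h)
  simp [coveredSet, hf, hsingle, hhead, hlast] at hx

theorem not_overlap_of_disjoint {ℓ m : Lab E} (h : ℓ.path.Disjoint m.path) : ¬ Overlap G ℓ m :=
  fun ⟨_, _, hℓ, hm, _⟩ => h (mem_path_of_mem_coveredSet hℓ) (mem_path_of_mem_coveredSet hm)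

theorem IsLabeling.mono {L L' : Set (Lab E)} (hL : IsLabeling G lam WS L) (h : L' ⊆ L) :
    IsLabeling G lam WS L' :=
  ⟨fun m hm => hL.1 m (h hm), fun m hm m' hm' => hL.2 m (h hm) m' (h hm')⟩

theorem IsLabeling.insert_of_disjoint {L : Set (Lab E)} {s : Lab E} (hL : IsLabeling G lam WS L)
    (hs : Valid G lam s ∧ WS s) (hdisj : ∀ m ∈ L, s.path.Disjoint m.path) :
    IsLabeling G lam WS (insert s L) := by
  refine ⟨?_, ?_⟩
  · rintro m (rfl | hm)
    exacts [hs, hL.1 m hm]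
  · rintro m (rfl | hm) m' (rfl | hm') hne
    · exact absurd rfl hne
    · exact not_overlap_of_disjoint (hdisj m' hm')
    · exact not_overlap_of_disjoint (hdisj m hm).symm
    · exact hL.2 m hm m' hm' hne

theorem labeledSecs_union (L₁ L₂ : Set (Lab E)) :
    labeledSecs G (L₁ ∪ L₂) = labeledSecs G L₁ ∪ labeledSecs G L₂ := by
  ext x
  simp only [labeledSecs, Set.mem_union, Set.mem_ofPred_eq]
  grind

theorem labeledSecs_singleton (s : Lab E) :
    labeledSecs G {s} = {x | G.isRS x ∧ x ∈ s.path} := by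
  simp [labeledSecs]

theorem labeledSecs_eq_diff_union {L : Set (Lab E)} {ℓ : Lab E} (hℓ : ℓ ∈ L) :
    labeledSecs G L = labeledSecs G (L \ {ℓ}) ∪ {x | G.isRS x ∧ x ∈ ℓ.path} := by
  rw [← labeledSecs_singleton, ← labeledSecs_union, Set.sdiff_union_of_subset]
  exact Set.singleton_subset_iff.2 hℓ

theorem Stub.lam_le_len {x : E} (h : Stub G lam WS x) : lam (G.road x) ≤ G.len x := by
  obtain ⟨-, ⟨p, s, t⟩, ⟨-, -, -, -, hhead, hlast, -, hlen⟩, -, hp⟩ := h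
  obtain rfl : p = [x] := hp
  have hlen : t - s = lam (G.road x) := hlen x rfl
  linarith [(hhead x rfl).2.1, (hlast x rfl).2.2]

theorem IsLabeling.exists_extend_stub {L : Set (Lab E)} {x : E} (hL : IsLabeling G lam WS L)
    (hx : Stub G lam WS x) :
    ∃ L', IsLabeling G lam WS L' ∧ (∀ m ∈ L', m ∈ L ∨ m.path = [x]) ∧
      labeledSecs G L' = insert x (labeledSecs G L) := by
  by_cases hcov : ∃ m ∈ L, x ∈ m.path
  · refine ⟨L, hL, fun m hm => Or.inl hm, ?_⟩
    exact (Set.insert_eq_of_mem (show x ∈ labeledSecs G L from ⟨hx.1, hcov⟩)).symm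
  · obtain ⟨hxRS, s, hs, hws, hsp⟩ := hx
    push Not at hcov
    refine ⟨insert s L, hL.insert_of_disjoint ⟨hs, hws⟩ ?_, ?_, ?_⟩
    · intro m hm y hy hym
      rw [hsp, List.mem_singleton] at hy
      exact hcov m hm (hy ▸ hym)
    · rintro m (rfl | hm)
      exacts [Or.inr hsp, Or.inl hm]
    · rw [Set.insert_eq, Set.insert_eq, labeledSecs_union, labeledSecs_singleton, hsp]
      ext y
      simp only [Set.mem_union, Set.mem_ofPred_eq, List.mem_singleton, Set.mem_singleton_iff]
      grind

theorem labLength_of_path_eq_cons_append {ℓ : Lab E} {h l : E} {mid : List E}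
    (hp : ℓ.path = h :: (mid ++ [l])) :
    labLength G ℓ = (G.len h - ℓ.s) + (mid.map G.len).sum + ℓ.t := by
  obtain ⟨p, s, t⟩ := ℓ
  obtain rfl : p = h :: (mid ++ [l]) := hp
  cases mid with
  | nil => simp [labLength]
  | cons a mid =>
    simp only [labLength, List.cons_append]
    rw [← List.cons_append, List.dropLast_concat]

theorem Valid.exists_eq_cons_append {ℓ : Lab E} (hℓ : Valid G lam ℓ) {j : E} (hj : j ∈ ℓ.path)
    (hjRS : ¬ G.isRS j) : ∃ h mid l, ℓ.path = h :: (mid ++ [l]) ∧ j ∈ mid := by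
  obtain ⟨hne, -, -, -, hhead, hlast, -⟩ := hℓ
  obtain ⟨h, q, hp⟩ := List.exists_cons_of_ne_nil hne
  rcases q.eq_nil_or_concat' with rfl | ⟨mid, l, rfl⟩
  · simp only [hp, List.mem_singleton] at hj
    exact (hjRS (hj ▸ (hhead h (by simp [hp])).1)).elim
  · refine ⟨h, mid, l, hp, ?_⟩
    have hjh : j ≠ h := fun hjh => hjRS (hjh ▸ (hhead h (by simp [hp])).1)
    have hjl : j ≠ l := fun hjl =>
      hjRS (hjl ▸ (hlast l (by rw [hp, ← List.cons_append, List.getLast?_concat])).1)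
    simpa [hp, hjh, hjl] using hj

theorem Valid.sum_len_le {ℓ : Lab E} (hℓ : Valid G lam ℓ) {h l : E} {mid : List E}
    (hp : ℓ.path = h :: (mid ++ [l])) : (mid.map G.len).sum ≤ lam (G.road h) := by
  obtain ⟨-, -, -, -, hhead, hlast, -, hlen⟩ := hℓ
  have hh : ℓ.path.head? = some h := by simp [hp]
  have hl : ℓ.path.getLast? = some l := by rw [hp, ← List.cons_append, List.getLast?_concat]
  have := labLength_of_path_eq_cons_append (G := G) hp
  linarith [hlen h hh, (hhead h hh).2.2, (hlast l hl).2.1]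

theorem Valid.len_lt_of_mem_interior {ℓ : Lab E} (hℓ : Valid G lam ℓ) {h l x j : E}
    {mid : List E} (hp : ℓ.path = h :: (mid ++ [l])) (hx : x ∈ mid) (hj : j ∈ mid)
    (hxj : x ≠ j) : G.len x < lam (G.road h) :=
  calc G.len x < G.len x + G.len j := lt_add_of_pos_right _ (G.len_pos j)
    _ ≤ (mid.map G.len).sum := List.add_le_sum_map_of_ne (fun a => (G.len_pos a).le) hx hj hxj
    _ ≤ lam (G.road h) := hℓ.sum_len_le hp

theorem Valid.ends_ne_of_not_isRS {ℓ : Lab E} (hℓ : Valid G lam ℓ) {j : E} (hjRS : ¬ G.isRS j) :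
    ℓ.path.head? ≠ some j ∧ ℓ.path.getLast? ≠ some j :=
  ⟨fun h => hjRS (hℓ.2.2.2.2.1 j h).1, fun h => hjRS (hℓ.2.2.2.2.2.1 j h).1⟩

theorem Valid.coveredSet_of_not_isRS {ℓ : Lab E} (hℓ : Valid G lam ℓ) {j : E} (hj : j ∈ ℓ.path)
    (hjRS : ¬ G.isRS j) : coveredSet G ℓ j = Set.Icc 0 (G.len j) := by
  obtain ⟨hhead, hlast⟩ := hℓ.ends_ne_of_not_isRS hjRS
  have hlen : ℓ.path.length ≠ 1 := by
    intro h1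
    obtain ⟨a, ha⟩ := List.length_eq_one_iff.1 h1
    obtain rfl : j = a := by simpa [ha] using hj
    exact hhead (by simp [ha])
  simp [coveredSet, hlen, hhead, hlast, hj]

theorem IsLabeling.eq_of_mem_path_of_not_isRS {L : Set (Lab E)} (hL : IsLabeling G lam WS L)
    {m m' : Lab E} (hm : m ∈ L) (hm' : m' ∈ L) {j : E} (hj : j ∈ m.path) (hj' : j ∈ m'.path)
    (hjRS : ¬ G.isRS j) : m = m' := by
  by_contra hne
  have hvalid := (hL.1 m hm).1
  have hzero : (0 : ℝ) ∈ Set.Icc 0 (G.len j) := ⟨le_rfl, (G.len_pos j).le⟩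
  refine hL.2 m hm m' hm' hne ⟨j, 0, ?_, ?_, fun ⟨hend, _⟩ => ?_⟩
  · rwa [hvalid.coveredSet_of_not_isRS hj hjRS]
  · rwa [(hL.1 m' hm').1.coveredSet_of_not_isRS hj' hjRS]
  · obtain ⟨hhead, hlast⟩ := hvalid.ends_ne_of_not_isRS hjRS
    exact hend.elim (fun h => hhead h.1) (fun h => hlast h.1)

def EdgesMeet (G : RoadGraph V E) (x y : E) : Prop := ∃ v, incident G x v ∧ incident G y v

theorem EdgesMeet.symm {x y : E} (h : EdgesMeet G x y) : EdgesMeet G y x :=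
  let ⟨v, hx, hy⟩ := h; ⟨v, hy, hx⟩

theorem EdgesMeet.of_inc_eq {x y : E} (h : (G.inc x).2 = (G.inc y).1) : EdgesMeet G x y :=
  ⟨_, Or.inr h, Or.inl rfl⟩

theorem JReach.of_incident {u v w : V} {c : E} (hv : JReach G u v) (hc : ¬ G.isRS c)
    (hcv : incident G c v) (hcw : incident G c w) : JReach G u w := by
  rcases hcv with rfl | rfl <;> rcases hcw with rfl | rfl
  · exact hv
  · exact Relation.ReflTransGen.tail hv ⟨c, hc, Or.inl rfl⟩
  · exact Relation.ReflTransGen.tail hv ⟨c, hc, Or.inr rfl⟩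
  · exact hv

theorem exists_isRS_reachable_of_isChain {u : V} :
    ∀ {q : List E}, q.IsChain (EdgesMeet G) →
      (∀ x ∈ q.head?, ∃ v, JReach G u v ∧ incident G x v) → (∃ x ∈ q, G.isRS x) →
      ∃ x ∈ q, G.isRS x ∧ ∃ w, JReach G u w ∧ incident G x w
  | [], _, _, ⟨_, hx, _⟩ => absurd hx List.not_mem_nil
  | c :: q, hchain, hhead, ⟨x, hx, hxRS⟩ => by
    obtain ⟨v, hv, hcv⟩ := hhead c rfl
    by_cases hc : G.isRS c
    · exact ⟨c, List.mem_cons_self, hc, v, hv, hcv⟩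
    obtain ⟨hmeet, hchain⟩ := List.isChain_cons.1 hchain
    have hx : x ∈ q := (List.mem_cons.1 hx).resolve_left fun h => hc (h ▸ hxRS)
    have hhead : ∀ y ∈ q.head?, ∃ w, JReach G u w ∧ incident G y w := fun y hy =>
      let ⟨w, hcw, hyw⟩ := hmeet y hy
      ⟨w, hv.of_incident hc hcv hcw, hyw⟩
    obtain ⟨x₀, hx₀, hrest⟩ := exists_isRS_reachable_of_isChain hchain hhead ⟨x, hx, hxRS⟩
    exact ⟨x₀, List.mem_cons_of_mem c hx₀, hrest⟩

theorem exists_isRS_reachable_of_isChain_of_mem {p : List E} (hp : p.IsChain (EdgesMeet G))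
    {j x : E} {u : V} (hjp : j ∈ p) (hj : ¬ G.isRS j) (hju : incident G j u) (hx : x ∈ p)
    (hxRS : G.isRS x) : ∃ x₀ ∈ p, G.isRS x₀ ∧ ∃ w, JReach G u w ∧ incident G x₀ w := by
  obtain ⟨p₁, p₂, rfl⟩ := List.append_of_mem hjp
  have hstart : ∀ q : List E, q.head? = some j →
      ∀ y ∈ q.head?, ∃ v, JReach G u v ∧ incident G y v := by
    intro q hq y hy
    obtain rfl : y = j := by simpa [hq] using hy.symm
    exact ⟨u, Relation.ReflTransGen.refl, hju⟩
  rcases List.mem_append.1 hx with hx | hx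
  · have hchain : (p₁ ++ [j]).reverse.IsChain (EdgesMeet G) :=
      List.isChain_reverse.2 ((hp.infix ⟨[], p₂, by simp⟩).imp fun _ _ h => h.symm)
    obtain ⟨x₀, hx₀, hrest⟩ := exists_isRS_reachable_of_isChain hchain (hstart _ (by simp))
      ⟨x, by simp [hx], hxRS⟩
    refine ⟨x₀, ?_, hrest⟩
    simp only [List.reverse_append, List.reverse_singleton, List.singleton_append,
      List.mem_cons, List.mem_reverse] at hx₀
    simp only [List.mem_append, List.mem_cons]
    tauto
  · obtain ⟨x₀, hx₀, hrest⟩ := exists_isRS_reachable_of_isChain (hp.infix ⟨p₁, [], by simp⟩)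
      (hstart _ rfl) ⟨x, hx, hxRS⟩
    exact ⟨x₀, List.mem_append_right _ hx₀, hrest⟩

theorem lam_le_len_of_mem_Re {e x : E} {u : V} (hstub_e : Stub G lam WS e)
    (hstubs : ∀ e'' ∈ Re G e u, e'' ≠ e → Stub G lam WS e'') (hx : x ∈ Re G e u) :
    lam (G.road e) ≤ G.len x := by
  by_cases hxe : x = e
  · exact hxe ▸ hstub_e.lam_le_len
  · exact hx.2.1 ▸ (hstubs x hx hxe).lam_le_len

theorem Valid.not_isRS_of_mem_interior {ℓ : Lab E} (hℓ : Valid G lam ℓ) {h l e j x : E}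
    {mid : List E} {u : V} (hp : ℓ.path = h :: (mid ++ [l])) (hjmid : j ∈ mid)
    (hj : ¬ G.isRS j) (hju : incident G j u) (he : e ∈ ℓ.path) (hstub_e : Stub G lam WS e)
    (hstubs : ∀ e'' ∈ Re G e u, e'' ≠ e → Stub G lam WS e'') (hx : x ∈ mid) :
    ¬ G.isRS x := by
  intro hxRS
  have hmid : mid.IsChain (EdgesMeet G) :=
    (hℓ.2.2.1.imp fun _ _ => EdgesMeet.of_inc_eq).infix ⟨[h], [l], by simp [hp]⟩
  obtain ⟨x₀, hx₀, hx₀RS, hreach⟩ :=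
    exists_isRS_reachable_of_isChain_of_mem hmid hjmid hj hju hx hxRS
  have hroad : ∀ y ∈ ℓ.path, G.road y = G.road e := fun y hy => hℓ.2.2.2.1 y hy e he
  have hx₀Re : x₀ ∈ Re G e u := ⟨hx₀RS, hroad x₀ (by simp [hp, hx₀]), hreach⟩
  have hlt := hℓ.len_lt_of_mem_interior hp hx₀ hjmid fun h => hj (h ▸ hx₀RS)
  rw [hroad h (by simp [hp])] at hlt
  exact (lam_le_len_of_mem_Re hstub_e hstubs hx₀Re).not_gt hlt

theorem Valid.setOf_isRS_mem_path_eq_pair {ℓ : Lab E} (hℓ : Valid G lam ℓ) {e e' j : E} {u : V}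
    (hstub_e : Stub G lam WS e) (hj : ¬ G.isRS j) (hju : incident G j u)
    (hstubs : ∀ e'' ∈ Re G e u, e'' ≠ e → Stub G lam WS e'') (he' : e' ∈ Re G e u)
    (he'ne : e' ≠ e) (hce : e ∈ ℓ.path) (hcj : j ∈ ℓ.path) (hce' : e' ∈ ℓ.path) :
    {x | G.isRS x ∧ x ∈ ℓ.path} = {e, e'} := by
  obtain ⟨h, mid, l, hp, hjmid⟩ := hℓ.exists_eq_cons_append hcj hj
  have hends : ∀ x ∈ ℓ.path, G.isRS x → x = h ∨ x = l := by
    intro x hx hxRS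
    rw [hp, List.mem_cons, List.mem_append, List.mem_singleton] at hx
    rcases hx with hx | hx | hx
    · exact Or.inl hx
    · exact absurd hxRS (hℓ.not_isRS_of_mem_interior hp hjmid hj hju hce hstub_e hstubs hx)
    · exact Or.inr hx
  have heh := hends e hce hstub_e.1
  have he'h := hends e' hce' he'.1
  ext x
  simp only [Set.mem_ofPred_eq, Set.mem_insert_iff, Set.mem_singleton_iff]
  constructor
  · rintro ⟨hxRS, hx⟩
    have := hends x hx hxRS
    grind
  · rintro (rfl | rfl)
    exacts [⟨hstub_e.1, hce⟩, ⟨he'.1, hce'⟩]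

end RoadGraph

open RoadGraph in
theorem stmt14_general {V E : Type} (G : RoadGraph V E) (lam : ℕ → ℝ) (WS : Lab E → Prop)
    (L : Set (Lab E)) (hopt : Optimal G lam WS L)
    (ℓ : Lab E) (hℓ : ℓ ∈ L)
    (e e' j : E) (u : V)
    (hstub_e : Stub G lam WS e)
    (hj : ¬ G.isRS j) (hju : incident G j u)
    (hstubs : ∀ e'' ∈ Re G e u, e'' ≠ e → Stub G lam WS e'')
    (he' : e' ∈ Re G e u) (he'ne : e' ≠ e)
    (hcov : e ∈ ℓ.path ∧ j ∈ ℓ.path ∧ e' ∈ ℓ.path) :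
    (((∃ m ∈ L, m ≠ ℓ ∧ e ∈ m.path) ∧ (∃ m ∈ L, m ≠ ℓ ∧ e' ∈ m.path) ∧
        labeledSecs G (L \ {ℓ}) = labeledSecs G L) ∨
      (∃ L' : Set (Lab E), IsLabeling G lam WS L' ∧
        (∀ m ∈ L', m ∈ L \ {ℓ} ∨ m.path = [e] ∨ m.path = [e']) ∧
        countLabeled G L' = countLabeled G L)) ∧
    (∃ L'' : Set (Lab E), IsLabeling G lam WS L'' ∧
      countLabeled G L'' = countLabeled G L ∧ ∀ m ∈ L'', j ∉ m.path) := by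
  obtain ⟨hce, hcj, hce'⟩ := hcov
  have hL := hopt.1
  have hsecs := (hL.1 ℓ hℓ).1.setOf_isRS_mem_path_eq_pair hstub_e hj hju hstubs he' he'ne
    hce hcj hce'
  obtain ⟨L₁, hL₁, hL₁mem, hL₁secs⟩ := (hL.mono Set.sdiff_subset).exists_extend_stub hstub_e
  obtain ⟨L₂, hL₂, hL₂mem, hL₂secs⟩ := hL₁.exists_extend_stub (hstubs e' he' he'ne)
  have hmem : ∀ m ∈ L₂, m ∈ L \ {ℓ} ∨ m.path = [e] ∨ m.path = [e'] := fun m hm =>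
    (hL₂mem m hm).elim (fun h => (hL₁mem m h).imp_right Or.inl) (Or.inr ∘ Or.inr)
  have hcount : countLabeled G L₂ = countLabeled G L := by
    rw [countLabeled, countLabeled, hL₂secs, hL₁secs, labeledSecs_eq_diff_union hℓ, hsecs,
      Set.union_insert, Set.union_singleton, Set.insert_comm]
  refine ⟨Or.inr ⟨L₂, hL₂, hmem, hcount⟩, L₂, hL₂, hcount, fun m hm hjm => ?_⟩
  rcases hmem m hm with ⟨hmL, hmℓ⟩ | hp | hp
  · exact hmℓ (hL.eq_of_mem_path_of_not_isRS hmL hℓ hjm hcj hj)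
  · exact hj (List.mem_singleton.1 (hp ▸ hjm) ▸ hstub_e.1)
  · exact hj (List.mem_singleton.1 (hp ▸ hjm) ▸ he'.1)

open RoadGraph in
/-- Rule 4 correctness. If every road is a path and a label
`ℓ` of an optimal labeling labels a road section `e` and a stub `e'` of the same
road across a junction edge `j` (all other same-road sections reachable from `u`
being stubs), then either (a) both `e` and `e'` are also labeled by other labels
and removing `ℓ` keeps the same labeled sections, or (b) `ℓ` can be replaced by
labels fully contained in `e` and (if needed) `e'`, preserving the number of
labeled road sections; in both cases the junction edge `j` can be removed while
preserving the optimal value of MaxTotalCovering. -/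
theorem stmt14 {V E : Type} (G : RoadGraph V E) (lam : ℕ → ℝ) (WS : Lab E → Prop)
    (hpaths : ∀ r : ℕ, ∃ p : List E, p.Nodup ∧ (∀ e, G.road e = r ↔ e ∈ p) ∧
      List.Chain' (fun e f => ∃ v, incident G e v ∧ incident G f v) p)
    (L : Set (Lab E)) (hopt : Optimal G lam WS L)
    (ℓ : Lab E) (hℓ : ℓ ∈ L)
    (e e' j : E) (u : V)
    (hrs : G.isRS e) (hstub_e : Stub G lam WS e)
    (hj : ¬ G.isRS j) (heu : incident G e u) (hju : incident G j u)
    (hstubs : ∀ e'' ∈ Re G e u, e'' ≠ e → Stub G lam WS e'')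
    (he' : e' ∈ Re G e u) (he'ne : e' ≠ e)
    (hcov : e ∈ ℓ.path ∧ j ∈ ℓ.path ∧ e' ∈ ℓ.path) :
    (((∃ m ∈ L, m ≠ ℓ ∧ e ∈ m.path) ∧ (∃ m ∈ L, m ≠ ℓ ∧ e' ∈ m.path) ∧
        labeledSecs G (L \ {ℓ}) = labeledSecs G L) ∨
      (∃ L' : Set (Lab E), IsLabeling G lam WS L' ∧
        (∀ m ∈ L', m ∈ L \ {ℓ} ∨ m.path = [e] ∨ m.path = [e']) ∧
        countLabeled G L' = countLabeled G L)) ∧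
    (∃ L'' : Set (Lab E), IsLabeling G lam WS L'' ∧
      countLabeled G L'' = countLabeled G L ∧ ∀ m ∈ L'', j ∉ m.path) :=
  stmt14_general G lam WS L hopt ℓ hℓ e e' j u hstub_e hj hju hstubs he' he'ne hcov
end
end
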